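/- Define τ : ℝ^{2(2n+1)+1} → J¹ℝ^{2n+1} = ℝ^{2n+1} × ℝ^{2n+1} × ℝ by τ(x,y,z,X,Y,Z,θ) = ((x, Y, z), (Y − e^θ y, x − X, e^θ − 1), ⟨x,Y⟩ − ⟨X,Y⟩ + Z − z), where (x,y,z,X,Y,Z,θ) ∈ ℝⁿ×ℝⁿ×ℝ×ℝⁿ×ℝⁿ×ℝ×ℝ. Then τ is an injective smooth immersion, and the pullback under τ of the canonical contact form du − p·dq of J¹ℝ^{2n+1} equals (dZ − Y·dX) − e^θ(dz − y·dx); explicitly, for every point P = (x,y,z,X,Y,Z,θ) and every tangent vector v = (v_x,v_y,v_z,v_X,v_Y,v_Z,v_θ), the canonical contact form at τ(P) applied to Dτ(P)v equals (v_Z − ⟨Y, v_X⟩) − e^θ(v_z − ⟨y, v_x⟩). In particular τ is a contact embedding of (ℝ^{2(2n+1)+1}, ker(e^θ(dz − y·dx) − (dZ − Y·dX))) into J¹ℝ^{2n+1}. -/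

import Mathlib

noncomputable section

/-- ℝ^{2n+1} = ℝⁿ × ℝⁿ × ℝ with coordinates (x, y, z). -/
abbrev Cn (n : ℕ) := (Fin n → ℝ) × (Fin n → ℝ) × ℝ

/-- Euclidean pairing ⟨x, y⟩ on ℝⁿ. -/
def dot {n : ℕ} (x y : Fin n → ℝ) : ℝ := ∑ i, x i * y i

lemma dot_sub_left {n : ℕ} (a b c : Fin n → ℝ) : dot (a - b) c = dot a c - dot b c := by
  simp [dot, sub_mul, Finset.sum_sub_distrib]
lemma dot_sub_right {n : ℕ} (a b c : Fin n → ℝ) : dot a (b - c) = dot a b - dot a c := by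
  simp [dot, mul_sub, Finset.sum_sub_distrib]
lemma dot_add_left {n : ℕ} (a b c : Fin n → ℝ) : dot (a + b) c = dot a c + dot b c := by
  simp [dot, add_mul, Finset.sum_add_distrib]
lemma dot_add_right {n : ℕ} (a b c : Fin n → ℝ) : dot a (b + c) = dot a b + dot a c := by
  simp [dot, mul_add, Finset.sum_add_distrib]
lemma dot_smul_left {n : ℕ} (r : ℝ) (a b : Fin n → ℝ) : dot (r • a) b = r * dot a b := by
  simp [dot, Finset.mul_sum, mul_assoc]
lemma dot_smul_right {n : ℕ} (r : ℝ) (a b : Fin n → ℝ) : dot a (r • b) = r * dot a b := by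
  simp [dot, Finset.mul_sum, mul_left_comm, mul_assoc]
lemma dot_comm {n : ℕ} (a b : Fin n → ℝ) : dot a b = dot b a := by
  simp [dot, mul_comm]

/-- dot with fixed left argument as a CLM -/
def dotL {n : ℕ} (a : Fin n → ℝ) : (Fin n → ℝ) →L[ℝ] ℝ :=
  ∑ i, a i • ContinuousLinearMap.proj i

@[simp] lemma dotL_apply {n : ℕ} (a v : Fin n → ℝ) : dotL a v = dot a v := by
  simp [dotL, dot]

lemma HasFDerivAt.dot {n : ℕ} {E : Type*} [NormedAddCommGroup E] [NormedSpace ℝ E]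
    {f g : E → Fin n → ℝ} {f' g' : E →L[ℝ] Fin n → ℝ} {x : E}
    (hf : HasFDerivAt f f' x) (hg : HasFDerivAt g g' x) :
    HasFDerivAt (fun p => dot (f p) (g p))
      ((dotL (g x)).comp f' + (dotL (f x)).comp g') x := by
  have h : HasFDerivAt (fun p => ∑ i, f p i * g p i)
      (∑ i : Fin n, (f x i • ((ContinuousLinearMap.proj i :
          (Fin n → ℝ) →L[ℝ] ℝ).comp g') + g x i • ((ContinuousLinearMap.proj i :
          (Fin n → ℝ) →L[ℝ] ℝ).comp f'))) x := by
    apply HasFDerivAt.fun_sum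
    intro i _
    exact ((ContinuousLinearMap.proj (R := ℝ) (φ := fun _ : Fin n => ℝ) i).hasFDerivAt.comp x hf).mul
      ((ContinuousLinearMap.proj (R := ℝ) (φ := fun _ : Fin n => ℝ) i).hasFDerivAt.comp x hg)
  have he : (∑ i : Fin n, (f x i • ((ContinuousLinearMap.proj i :
          (Fin n → ℝ) →L[ℝ] ℝ).comp g') + g x i • ((ContinuousLinearMap.proj i :
          (Fin n → ℝ) →L[ℝ] ℝ).comp f')))
      = (dotL (g x)).comp f' + (dotL (f x)).comp g' := by
    ext v
    simp [_root_.dot, Finset.sum_add_distrib, mul_comm]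
    ring
  rw [← he]
  exact h

/-- Euclidean pairing on ℝ^{2n+1}. -/
def dotC {n : ℕ} (p a : Cn n) : ℝ := dot p.1 a.1 + dot p.2.1 a.2.1 + p.2.2 * a.2.2

/-- τ(x,y,z,X,Y,Z,θ) = ((x,Y,z), (Y − e^θ y, x − X, e^θ − 1), ⟨x,Y⟩ − ⟨X,Y⟩ + Z − z),
a map ℝ^{2(2n+1)+1} → J¹ℝ^{2n+1} = ℝ^{2n+1} × ℝ^{2n+1} × ℝ.
A point of the domain is P = ((x,y,z), (X,Y,Z), θ). -/
def tauC (n : ℕ) (P : Cn n × Cn n × ℝ) : Cn n × Cn n × ℝ :=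
  ((P.1.1, P.2.1.2.1, P.1.2.2),
   (P.2.1.2.1 - Real.exp P.2.2 • P.1.2.1, P.1.1 - P.2.1.1, Real.exp P.2.2 - 1),
   dot P.1.1 P.2.1.2.1 - dot P.2.1.1 P.2.1.2.1 + P.2.1.2.2 - P.1.2.2)

section proj
open ContinuousLinearMap
variable (n : ℕ)

def px : (Cn n × Cn n × ℝ) →L[ℝ] (Fin n → ℝ) :=
  (fst ℝ (Fin n → ℝ) ((Fin n → ℝ) × ℝ)).comp (fst ℝ (Cn n) (Cn n × ℝ))
def py : (Cn n × Cn n × ℝ) →L[ℝ] (Fin n → ℝ) :=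
  (fst ℝ (Fin n → ℝ) ℝ).comp ((snd ℝ (Fin n → ℝ) ((Fin n → ℝ) × ℝ)).comp (fst ℝ (Cn n) (Cn n × ℝ)))
def pz : (Cn n × Cn n × ℝ) →L[ℝ] ℝ :=
  (snd ℝ (Fin n → ℝ) ℝ).comp ((snd ℝ (Fin n → ℝ) ((Fin n → ℝ) × ℝ)).comp (fst ℝ (Cn n) (Cn n × ℝ)))
def pC2 : (Cn n × Cn n × ℝ) →L[ℝ] Cn n :=
  (fst ℝ (Cn n) ℝ).comp (snd ℝ (Cn n) (Cn n × ℝ))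
def pX : (Cn n × Cn n × ℝ) →L[ℝ] (Fin n → ℝ) :=
  (fst ℝ (Fin n → ℝ) ((Fin n → ℝ) × ℝ)).comp (pC2 n)
def pY : (Cn n × Cn n × ℝ) →L[ℝ] (Fin n → ℝ) :=
  (fst ℝ (Fin n → ℝ) ℝ).comp ((snd ℝ (Fin n → ℝ) ((Fin n → ℝ) × ℝ)).comp (pC2 n))
def pZ : (Cn n × Cn n × ℝ) →L[ℝ] ℝ :=
  (snd ℝ (Fin n → ℝ) ℝ).comp ((snd ℝ (Fin n → ℝ) ((Fin n → ℝ) × ℝ)).comp (pC2 n))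
def pth : (Cn n × Cn n × ℝ) →L[ℝ] ℝ :=
  (snd ℝ (Cn n) ℝ).comp (snd ℝ (Cn n) (Cn n × ℝ))

@[simp] lemma px_apply (v) : px n v = v.1.1 := rfl
@[simp] lemma py_apply (v) : py n v = v.1.2.1 := rfl
@[simp] lemma pz_apply (v) : pz n v = v.1.2.2 := rfl
@[simp] lemma pX_apply (v) : pX n v = v.2.1.1 := rfl
@[simp] lemma pY_apply (v) : pY n v = v.2.1.2.1 := rfl
@[simp] lemma pZ_apply (v) : pZ n v = v.2.1.2.2 := rfl
@[simp] lemma pth_apply (v) : pth n v = v.2.2 := rfl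

def dtau (P : Cn n × Cn n × ℝ) : (Cn n × Cn n × ℝ) →L[ℝ] (Cn n × Cn n × ℝ) :=
  ((px n).prod ((pY n).prod (pz n))).prod
  ((((pY n - (Real.exp P.2.2 • py n + (Real.exp P.2.2 • pth n).smulRight P.1.2.1)).prod
     ((px n - pX n).prod (Real.exp P.2.2 • pth n)))).prod
   ((dotL P.2.1.2.1).comp (px n) + (dotL P.1.1).comp (pY n)
      - ((dotL P.2.1.2.1).comp (pX n) + (dotL P.2.1.1).comp (pY n)) + pZ n - pz n))

lemma dtau_apply (P v : Cn n × Cn n × ℝ) :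
    dtau n P v =
      ((v.1.1, v.2.1.2.1, v.1.2.2),
       (v.2.1.2.1 - (Real.exp P.2.2 • v.1.2.1 + (Real.exp P.2.2 * v.2.2) • P.1.2.1),
        v.1.1 - v.2.1.1, Real.exp P.2.2 * v.2.2),
       dot P.2.1.2.1 v.1.1 + dot P.1.1 v.2.1.2.1
         - (dot P.2.1.2.1 v.2.1.1 + dot P.2.1.1 v.2.1.2.1) + v.2.1.2.2 - v.1.2.2) := by
  simp [dtau, mul_comm]

lemma hasFDerivAt_tauC (P : Cn n × Cn n × ℝ) : HasFDerivAt (tauC n) (dtau n P) P := by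
  have h1 : HasFDerivAt (fun Q : Cn n × Cn n × ℝ => (Q.1.1, Q.2.1.2.1, Q.1.2.2))
      ((px n).prod ((pY n).prod (pz n))) P :=
    ((px n).hasFDerivAt).prodMk (((pY n).hasFDerivAt).prodMk ((pz n).hasFDerivAt))
  have h2a : HasFDerivAt (fun Q : Cn n × Cn n × ℝ => Q.2.1.2.1 - Real.exp Q.2.2 • Q.1.2.1)
      (pY n - (Real.exp P.2.2 • py n + (Real.exp P.2.2 • pth n).smulRight P.1.2.1)) P :=
    ((pY n).hasFDerivAt).sub
      ((((pth n).hasFDerivAt).exp).smul ((py n).hasFDerivAt))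
  have h2b : HasFDerivAt (fun Q : Cn n × Cn n × ℝ => Q.1.1 - Q.2.1.1)
      (px n - pX n) P := ((px n).hasFDerivAt).sub ((pX n).hasFDerivAt)
  have h2c : HasFDerivAt (fun Q : Cn n × Cn n × ℝ => Real.exp Q.2.2 - 1)
      (Real.exp P.2.2 • pth n) P := (((pth n).hasFDerivAt).exp).sub_const 1
  have h3 : HasFDerivAt (fun Q : Cn n × Cn n × ℝ =>
      dot Q.1.1 Q.2.1.2.1 - dot Q.2.1.1 Q.2.1.2.1 + Q.2.1.2.2 - Q.1.2.2)
      ((dotL P.2.1.2.1).comp (px n) + (dotL P.1.1).comp (pY n)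
        - ((dotL P.2.1.2.1).comp (pX n) + (dotL P.2.1.1).comp (pY n)) + pZ n - pz n) P := by
    exact ((((((px n).hasFDerivAt).dot ((pY n).hasFDerivAt)).sub
      (((pX n).hasFDerivAt).dot ((pY n).hasFDerivAt))).add ((pZ n).hasFDerivAt)).sub
      ((pz n).hasFDerivAt))
  exact h1.prodMk ((h2a.prodMk (h2b.prodMk h2c)).prodMk h3)

end proj

lemma contDiff_dot2 {n : ℕ} : ContDiff ℝ (⊤ : ℕ∞) (fun p : (Fin n → ℝ) × (Fin n → ℝ) => dot p.1 p.2) := by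
  unfold dot
  apply ContDiff.sum
  intro i _
  exact (contDiff_pi.mp contDiff_fst i).mul (contDiff_pi.mp contDiff_snd i)

lemma contDiff_tauC (n : ℕ) : ContDiff ℝ (⊤ : ℕ∞) (tauC n) := by
  have hd : ∀ (f g : (Cn n × Cn n × ℝ) → Fin n → ℝ), ContDiff ℝ (⊤ : ℕ∞) f → ContDiff ℝ (⊤ : ℕ∞) g →
      ContDiff ℝ (⊤ : ℕ∞) (fun p => dot (f p) (g p)) :=
    fun f g hf hg => contDiff_dot2.comp (hf.prodMk hg)
  unfold tauC
  refine ContDiff.prodMk (by fun_prop) (ContDiff.prodMk (by fun_prop) ?_)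
  exact (((hd _ _ (by fun_prop) (by fun_prop)).sub (hd _ _ (by fun_prop) (by fun_prop))).add
    (by fun_prop)).sub (by fun_prop)

/-- τ is an injective smooth immersion, and the pullback under τ of the canonical contact form
du − p·dq of J¹ℝ^{2n+1} equals (dZ − Y·dX) − e^θ(dz − y·dx). -/
theorem stmt_8 (n : ℕ) :
    Function.Injective (tauC n) ∧
    ContDiff ℝ (⊤ : ℕ∞) (tauC n) ∧
    (∀ P : Cn n × Cn n × ℝ, Function.Injective (⇑(fderiv ℝ (tauC n) P))) ∧
    (∀ (P v : Cn n × Cn n × ℝ),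
      (fderiv ℝ (tauC n) P v).2.2 - dotC ((tauC n P).2.1) ((fderiv ℝ (tauC n) P v).1) =
        (v.2.1.2.2 - dot P.2.1.2.1 v.2.1.1) -
          Real.exp P.2.2 * (v.1.2.2 - dot P.1.2.1 v.1.1)) := by
  refine ⟨?_, contDiff_tauC n, ?_, ?_⟩
  · rintro ⟨⟨x, y, z⟩, ⟨X, Y, Z⟩, θ⟩ ⟨⟨x', y', z'⟩, ⟨X', Y', Z'⟩, θ'⟩ h
    simp only [tauC, Prod.mk.injEq] at h
    obtain ⟨⟨hx, hY, hz⟩, ⟨h2a, h2b, h2c⟩, h3⟩ := h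
    have hθ : θ = θ' := Real.exp_injective (by linarith)
    subst hx hY hz hθ
    have hy : y = y' := smul_right_injective _ (Real.exp_ne_zero θ) (sub_right_injective h2a)
    have hX : X = X' := sub_right_injective h2b
    subst hy hX
    have hZ : Z = Z' := by linarith
    subst hZ
    rfl
  · intro P
    rw [(hasFDerivAt_tauC n P).fderiv]
    rintro ⟨⟨x, y, z⟩, ⟨X, Y, Z⟩, θ⟩ ⟨⟨x', y', z'⟩, ⟨X', Y', Z'⟩, θ'⟩ h
    rw [dtau_apply, dtau_apply] at h
    simp only [Prod.mk.injEq] at h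
    obtain ⟨⟨hx, hY, hz⟩, ⟨h2a, h2b, h2c⟩, h3⟩ := h
    have hθ : θ = θ' := mul_left_cancel₀ (Real.exp_ne_zero _) h2c
    subst hx hY hz hθ
    have hy : y = y' :=
      smul_right_injective _ (Real.exp_ne_zero _) (add_left_injective _ (sub_right_injective h2a))
    have hX : X = X' := sub_right_injective h2b
    subst hy hX
    have hZ : Z = Z' := by linarith
    subst hZ
    rfl
  · intro P v
    rw [(hasFDerivAt_tauC n P).fderiv, dtau_apply]
    simp only [tauC, dotC, dot_sub_left, dot_smul_left]
    ring
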